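/- arXiv:2409.02593 — 7 statements merged into one kernel-verified Lean document; each statement's English description precedes it below -/
import Mathlib

section
/- Let G be a finite simple graph with minimum degree δ ≥ 1, e edges, and let I = {u_1, …, u_β} be an independent set of size β with every vertex of I having degree at most n − β (where n is the number of vertices). If ∑_{i=1}^{β} d(u_i) ≤ e, then ∑_{i=1}^{β} d(u_i)² ≤ (e(δ + n − β))² / (4 δ (n − β) β). -/
open Finset

theorem sum_sq_degrees_indep_le
    {V : Type*} [Fintype V] [DecidableEq V] [Nonempty V]
    (G : SimpleGraph V) [DecidableRel G.Adj]
    (n e δ β : ℕ) (hn : n = Fintype.card V) (he : e = G.edgeFinset.card)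
    (hδ : δ = G.minDegree) (hδ1 : 1 ≤ δ)
    (I : Finset V) (hI : ∀ u ∈ I, ∀ v ∈ I, ¬ G.Adj u v) (hβ : I.card = β)
    (hdeg : ∀ u ∈ I, (G.degree u : ℝ) ≤ (n : ℝ) - β)
    (hsum : (∑ u ∈ I, G.degree u) ≤ e) :
    (∑ u ∈ I, (G.degree u : ℝ) ^ 2) ≤
      ((e : ℝ) * ((δ : ℝ) + (n : ℝ) - β)) ^ 2 / (4 * δ * ((n : ℝ) - β) * β) := by
  rcases Nat.eq_zero_or_pos β with hb0 | hbpos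
  · subst hb0
    have hIe : I = ∅ := Finset.card_eq_zero.mp hβ
    subst hIe
    simp
  · set D : ℝ := (n : ℝ) - β with hDdef
    have hd_lb : ∀ u ∈ I, (δ : ℝ) ≤ (G.degree u : ℝ) := by
      intro u hu
      exact_mod_cast hδ ▸ G.minDegree_le_degree u
    obtain ⟨u0, hu0⟩ := Finset.card_pos.mp (hβ ▸ hbpos)
    have hδ1' : (1 : ℝ) ≤ (δ : ℝ) := by exact_mod_cast hδ1
    have hD1 : (1 : ℝ) ≤ D := le_trans (le_trans hδ1' (hd_lb u0 hu0)) (hdeg u0 hu0)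
    have hβ1 : (1 : ℝ) ≤ (β : ℝ) := by exact_mod_cast hbpos
    set S : ℝ := ∑ u ∈ I, (G.degree u : ℝ) with hSdef
    have hS_e : S ≤ (e : ℝ) := by
      rw [hSdef]
      push_cast [← Nat.cast_sum]
      exact_mod_cast hsum
    have hS0 : 0 ≤ S := Finset.sum_nonneg fun u _ => by positivity
    have key : (∑ u ∈ I, (G.degree u : ℝ) ^ 2) ≤ ((δ : ℝ) + D) * S - (δ : ℝ) * D * β := by
      have h1 : (∑ u ∈ I, (G.degree u : ℝ) ^ 2) ≤
          ∑ u ∈ I, (((δ : ℝ) + D) * (G.degree u : ℝ) - (δ : ℝ) * D) := by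
        apply Finset.sum_le_sum
        intro u hu
        nlinarith [hd_lb u hu, hdeg u hu]
      calc (∑ u ∈ I, (G.degree u : ℝ) ^ 2)
          ≤ ∑ u ∈ I, (((δ : ℝ) + D) * (G.degree u : ℝ) - (δ : ℝ) * D) := h1
        _ = ((δ : ℝ) + D) * S - (δ : ℝ) * D * β := by
            rw [Finset.sum_sub_distrib, ← Finset.mul_sum, Finset.sum_const, hβ]
            ring
    have hden : 0 < 4 * (δ : ℝ) * D * β := by positivity
    have hrw : (δ : ℝ) + (n : ℝ) - (β : ℝ) = (δ : ℝ) + D := by rw [hDdef]; ring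
    rw [hrw, le_div_iff₀ hden]
    have hx : ((δ : ℝ) + D) * S ≤ (e : ℝ) * ((δ : ℝ) + D) := by
      have : ((δ : ℝ) + D) * S ≤ ((δ : ℝ) + D) * (e : ℝ) :=
        mul_le_mul_of_nonneg_left hS_e (by linarith)
      linarith
    have hx0 : 0 ≤ ((δ : ℝ) + D) * S := by positivity
    have hsq : (((δ : ℝ) + D) * S) ^ 2 ≤ ((e : ℝ) * ((δ : ℝ) + D)) ^ 2 := by
      apply pow_le_pow_left₀ hx0 hx
    nlinarith [sq_nonneg (((δ : ℝ) + D) * S - 2 * ((δ : ℝ) * D * β)), key, hsq,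
      mul_le_mul_of_nonneg_right key (le_of_lt hden)]
end

section
/- Let G be a graph with n vertices, e edges, minimum degree δ ≥ 1, maximum degree Δ, and independence number β. Then M₁(G) ≤ (n − β)Δ² + (e(δ + n − β))² / (4δ(n − β)β). -/
open Finset

theorem zagreb_upper_bound
    {V : Type*} [Fintype V] [DecidableEq V] [Nonempty V]
    (G : SimpleGraph V) [DecidableRel G.Adj]
    (n e δ Δ β : ℕ) (hn : n = Fintype.card V) (he : e = G.edgeFinset.card)
    (hδ : δ = G.minDegree) (hδ1 : 1 ≤ δ) (hΔ : Δ = G.maxDegree)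
    (hβ : ∃ I : Finset V, (∀ u ∈ I, ∀ v ∈ I, ¬ G.Adj u v) ∧ I.card = β)
    (hβmax : ∀ I : Finset V, (∀ u ∈ I, ∀ v ∈ I, ¬ G.Adj u v) → I.card ≤ β) :
    ((∑ v, (G.degree v) ^ 2 : ℕ) : ℝ) ≤
      ((n : ℝ) - β) * Δ ^ 2 +
        ((e : ℝ) * ((δ : ℝ) + n - β)) ^ 2 / (4 * δ * ((n : ℝ) - β) * β) := by
  obtain ⟨I, hI, hIcard⟩ := hβ
  -- β ≥ 1
  have hβ1 : 1 ≤ β := by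
    have := hβmax {Classical.arbitrary V} (by
      intro u hu v hv
      simp only [Finset.mem_singleton] at hu hv
      subst hu; subst hv; exact G.irrefl)
    simpa using this
  have hβn' : β ≤ n := by
    rw [hn, ← hIcard, ← Finset.card_univ]
    exact Finset.card_le_card (Finset.subset_univ I)
  -- β < n
  have hβn : β < n := by
    rcases lt_or_eq_of_le hβn' with h | h
    · exact h
    · exfalso
      have hIuniv : I = Finset.univ := by
        apply Finset.eq_univ_of_card
        rw [hIcard, ← hn, h]
      obtain ⟨v⟩ := ‹Nonempty V›
      have hdeg : 0 < G.degree v := lt_of_lt_of_le hδ1 (hδ ▸ G.minDegree_le_degree v)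
      obtain ⟨w, hw⟩ := Finset.card_pos.mp hdeg
      rw [SimpleGraph.mem_neighborFinset] at hw
      exact hI v (hIuniv ▸ Finset.mem_univ v) w (hIuniv ▸ Finset.mem_univ w) hw
  -- neighbors of vertices in I are outside I
  have hnbr : ∀ v ∈ I, G.neighborFinset v ⊆ Iᶜ := by
    intro v hv w hw
    rw [SimpleGraph.mem_neighborFinset] at hw
    rw [Finset.mem_compl]
    intro hwI
    exact hI v hv w hwI hw
  have hcardcompl : Iᶜ.card = n - β := by
    rw [Finset.card_compl, hIcard, hn]
  -- degree bound for v ∈ I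
  have hdegI : ∀ v ∈ I, G.degree v ≤ n - β := by
    intro v hv
    calc G.degree v = (G.neighborFinset v).card := rfl
      _ ≤ Iᶜ.card := Finset.card_le_card (hnbr v hv)
      _ = n - β := hcardcompl
  -- sum of degrees over I is at most e
  have hSe : ∑ v ∈ I, G.degree v ≤ e := by
    have key : ∑ v ∈ I, G.degree v ≤ ∑ v ∈ Iᶜ, G.degree v := by
      have h1 : ∀ v ∈ I, G.degree v = ∑ w ∈ Iᶜ, if G.Adj v w then 1 else 0 := by
        intro v hv
        have : G.neighborFinset v = Iᶜ.filter (G.Adj v) := by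
          ext w
          simp only [SimpleGraph.mem_neighborFinset, Finset.mem_filter, Finset.mem_compl]
          constructor
          · intro h; exact ⟨fun hwI => hI v hv w hwI h, h⟩
          · intro h; exact h.2
        rw [SimpleGraph.degree, this, Finset.card_filter]
      calc ∑ v ∈ I, G.degree v = ∑ v ∈ I, ∑ w ∈ Iᶜ, if G.Adj v w then 1 else 0 :=
            Finset.sum_congr rfl h1
        _ = ∑ w ∈ Iᶜ, ∑ v ∈ I, if G.Adj v w then 1 else 0 := Finset.sum_comm
        _ ≤ ∑ w ∈ Iᶜ, G.degree w := by
            apply Finset.sum_le_sum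
            intro w _
            have : ∑ v ∈ I, (if G.Adj v w then 1 else 0) = (I.filter (G.Adj w)).card := by
              rw [Finset.card_filter]
              apply Finset.sum_congr rfl
              intro v _
              simp [G.adj_comm]
            rw [this, SimpleGraph.degree]
            apply Finset.card_le_card
            intro v hv
            rw [Finset.mem_filter] at hv
            rw [SimpleGraph.mem_neighborFinset]
            exact hv.2
    have htot : ∑ v ∈ I, G.degree v + ∑ v ∈ Iᶜ, G.degree v = 2 * e := by
      rw [Finset.sum_add_sum_compl, he]
      exact G.sum_degrees_eq_twice_card_edges
    omega
  -- move to real numbers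
  set D : ℝ := (n : ℝ) - β with hD
  have hD1 : 1 ≤ D := by
    rw [hD]
    have : (β : ℝ) + 1 ≤ n := by exact_mod_cast hβn
    linarith
  have hb1 : (1 : ℝ) ≤ β := by exact_mod_cast hβ1
  have hd1 : (1 : ℝ) ≤ δ := by exact_mod_cast hδ1
  have hcastD : ((n - β : ℕ) : ℝ) = D := by
    rw [Nat.cast_sub hβn']
  have hsplit : ((∑ v, (G.degree v) ^ 2 : ℕ) : ℝ)
      = ∑ v ∈ I, ((G.degree v : ℝ)) ^ 2 + ∑ v ∈ Iᶜ, ((G.degree v : ℝ)) ^ 2 := by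
    rw [Finset.sum_add_sum_compl]
    push_cast
    ring
  -- complement part
  have hcomp : ∑ v ∈ Iᶜ, ((G.degree v : ℝ)) ^ 2 ≤ D * (Δ : ℝ) ^ 2 := by
    calc ∑ v ∈ Iᶜ, ((G.degree v : ℝ)) ^ 2 ≤ ∑ _v ∈ Iᶜ, ((Δ : ℝ)) ^ 2 := by
          apply Finset.sum_le_sum
          intro v _
          have h1 : G.degree v ≤ Δ := hΔ ▸ G.degree_le_maxDegree v
          have : (G.degree v : ℝ) ≤ (Δ : ℝ) := by exact_mod_cast h1
          have h0 : (0 : ℝ) ≤ (G.degree v : ℝ) := by positivity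
          nlinarith
      _ = D * (Δ : ℝ) ^ 2 := by
          rw [Finset.sum_const, hcardcompl, nsmul_eq_mul, hcastD]
  -- independent part
  set S : ℝ := ∑ v ∈ I, (G.degree v : ℝ) with hSdef
  have hSle : S ≤ (e : ℝ) := by
    rw [hSdef, ← Nat.cast_sum]
    exact_mod_cast hSe
  have hind : ∑ v ∈ I, ((G.degree v : ℝ)) ^ 2 ≤ ((δ : ℝ) + D) * S - (δ : ℝ) * D * β := by
    have hpt : ∀ v ∈ I, ((G.degree v : ℝ)) ^ 2
        ≤ ((δ : ℝ) + D) * (G.degree v : ℝ) - (δ : ℝ) * D := by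
      intro v hv
      have hlo : (δ : ℝ) ≤ (G.degree v : ℝ) := by
        exact_mod_cast hδ ▸ G.minDegree_le_degree v
      have hhi : (G.degree v : ℝ) ≤ D := by
        rw [← hcastD]
        exact_mod_cast hdegI v hv
      nlinarith [mul_nonneg (sub_nonneg.mpr hlo) (sub_nonneg.mpr hhi)]
    calc ∑ v ∈ I, ((G.degree v : ℝ)) ^ 2
        ≤ ∑ v ∈ I, (((δ : ℝ) + D) * (G.degree v : ℝ) - (δ : ℝ) * D) :=
          Finset.sum_le_sum hpt
      _ = ((δ : ℝ) + D) * S - (δ : ℝ) * D * β := by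
          rw [Finset.sum_sub_distrib, ← Finset.mul_sum, Finset.sum_const, hIcard,
            nsmul_eq_mul]
          ring
  -- final algebra
  have hdD : (0 : ℝ) < (δ : ℝ) + D := by linarith
  have hstep : ((δ : ℝ) + D) * S - (δ : ℝ) * D * β
      ≤ ((e : ℝ) * ((δ : ℝ) + D)) ^ 2 / (4 * δ * D * β) := by
    have h1 : ((δ : ℝ) + D) * S - (δ : ℝ) * D * β
        ≤ ((δ : ℝ) + D) * e - (δ : ℝ) * D * β := by
      nlinarith
    have hpos : (0 : ℝ) < 4 * δ * D * β := by positivity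
    have h2 : ((δ : ℝ) + D) * e - (δ : ℝ) * D * β
        ≤ ((e : ℝ) * ((δ : ℝ) + D)) ^ 2 / (4 * δ * D * β) := by
      rw [le_div_iff₀ hpos]
      nlinarith [sq_nonneg ((e : ℝ) * ((δ : ℝ) + D) - 2 * δ * D * β)]
    exact h1.trans h2
  have hfinal : ((δ : ℝ) + (n : ℝ) - β) = (δ : ℝ) + D := by rw [hD]; ring
  rw [hsplit]
  calc ∑ v ∈ I, ((G.degree v : ℝ)) ^ 2 + ∑ v ∈ Iᶜ, ((G.degree v : ℝ)) ^ 2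
      ≤ (((e : ℝ) * ((δ : ℝ) + D)) ^ 2 / (4 * δ * D * β)) + D * (Δ : ℝ) ^ 2 := by
        exact add_le_add (le_trans hind hstep) hcomp
    _ = ((n : ℝ) - β) * Δ ^ 2 +
        ((e : ℝ) * ((δ : ℝ) + n - β)) ^ 2 / (4 * δ * ((n : ℝ) - β) * β) := by
        rw [hD]
        ring
end

section
/- (Chvátal–Erdős) Let G be a k-connected graph of order n ≥ 3. If the independence number of G is at most k, then G is Hamiltonian. -/
/-!
Let `C` be a longest cycle and suppose a vertex `v` lies off it. Let `A` be the set of vertices of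
`C` adjacent to the part of `G - C` that is reachable from `v`. Every walk from `v` to a vertex of
`C` outside `A` meets `A`, so `k`-connectivity gives `k ≤ #A`. The successor on `C` of a vertex
of `A` is adjacent neither to `v` nor to the successor of another vertex of `A`: otherwise `C`
could be rerouted through `v`'s side into a longer cycle. Hence `v` and the successors of `A` form
an independent set of size `#A + 1 > k`. A first cycle exists because every degree is at least
`2` (for `k ≤ 1` the graph is complete).
-/

open Finset

/-- `G` is `k`-connected: more than `k` vertices, and deleting fewer than `k`
vertices leaves a connected graph. -/
def KConnected {V : Type*} [Fintype V] (k : ℕ) (G : SimpleGraph V) : Prop :=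
  k < Fintype.card V ∧
    ∀ S : Finset V, S.card < k → (G.induce ((↑S : Set V)ᶜ)).Connected

namespace List

variable {α : Type*} [DecidableEq α] {l T : List α} {x y : α}

theorem next_eq_of_isRotated_cons_cons (hl : l.Nodup) (h : l ~r x :: y :: T) (hx : x ∈ l) :
    l.next x hx = y := by
  rw [isRotated_next_eq h hl hx, next_cons_cons_eq]

theorem exists_isRotated_cons_next (hl : l.Nodup) (hlen : 2 ≤ l.length) (hx : x ∈ l) :
    ∃ T, l ~r x :: l.next x hx :: T := by
  obtain ⟨l₁, l₂, rfl⟩ := append_of_mem hx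
  have hlen' : 0 < (l₂ ++ l₁).length := by
    simp only [length_append, length_cons] at hlen ⊢; omega
  obtain ⟨y, T, hyT⟩ := exists_cons_of_length_pos hlen'
  have hrot : l₁ ++ x :: l₂ ~r x :: y :: T := by
    rw [← hyT]; simpa using (isRotated_append (l := l₁) (l' := x :: l₂))
  exact ⟨T, next_eq_of_isRotated_cons_cons hl hrot hx ▸ hrot⟩

theorem exists_isRotated_cons_next_append_cons_next (hl : l.Nodup) (hlen : 2 ≤ l.length)
    (hx : x ∈ l) (hy : y ∈ l) (hxy : x ≠ y) (hxy' : l.next x hx ≠ y)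
    (hyx' : l.next y hy ≠ x) :
    ∃ X Y, l ~r x :: l.next x hx :: (X ++ y :: l.next y hy :: Y) := by
  obtain ⟨T, hT⟩ := exists_isRotated_cons_next hl hlen hx
  have hyT : y ∈ T := by
    simpa [hxy.symm, hxy'.symm] using hT.mem_iff.mp hy
  obtain ⟨X, Z, rfl⟩ := append_of_mem hyT
  have hrot : l ~r y :: (Z ++ x :: l.next x hx :: X) := hT.trans <| by
    simpa using isRotated_append (l := x :: l.next x hx :: X) (l' := y :: Z)
  rcases Z with _ | ⟨y', Y⟩
  · exact absurd (next_eq_of_isRotated_cons_cons hl hrot hy) hyx'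
  · refine ⟨X, Y, ?_⟩
    rwa [next_eq_of_isRotated_cons_cons hl hrot hy]

theorem eq_of_next_eq (hl : l.Nodup) (hx : x ∈ l) (hy : y ∈ l)
    (h : l.next x hx = l.next y hy) : x = y := by
  rw [← prev_next l hl x hx, ← prev_next l hl y hy]
  simp only [h]

end List

namespace SimpleGraph

variable {V : Type*} {G : SimpleGraph V}

def IsCycleList (G : SimpleGraph V) (l : List V) : Prop :=
  3 ≤ l.length ∧ l.Nodup ∧ (l : Cycle V).Chain G.Adj

theorem Walk.IsCycle.isCycleList_support_tail {u : V} {p : G.Walk u u} (hp : p.IsCycle) :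
    G.IsCycleList p.support.tail := by
  have hlen : 3 ≤ p.support.tail.length := by
    simpa [Walk.length_support] using hp.three_le_length
  have hne : p.support.tail ≠ [] := List.ne_nil_of_length_pos (by omega)
  refine ⟨hlen, hp.support_nodup, ?_⟩
  rw [Cycle.chain_ne_nil _ hne, List.getLast_tail, Walk.getLast_support, Walk.cons_tail_support]
  exact p.isChain_adj_support

theorem IsCycleList.isHamiltonian [Fintype V] [DecidableEq V] {l : List V} (h : G.IsCycleList l)
    (hl : ∀ v, v ∈ l) : G.IsHamiltonian := by
  obtain ⟨hlen, hnd, hch⟩ := h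
  obtain ⟨a, t, rfl⟩ := List.exists_cons_of_length_pos (by omega : 0 < l.length)
  rw [Cycle.chain_coe_cons] at hch
  obtain ⟨p, hp⟩ : ∃ p : G.Walk a a, p.support.tail = t ++ [a] :=
    ⟨(Walk.ofSupport _ (List.cons_ne_nil _ _) hch).copy (List.head_cons ..) (by simp),
      by rw [Walk.support_copy, Walk.support_ofSupport, List.tail_cons]⟩
  have hnd' : (t ++ [a]).Nodup := (List.perm_append_singleton a t).nodup_iff.mpr hnd
  refine fun _ ↦ ⟨a, p, ?_⟩
  rw [Walk.isHamiltonianCycle_iff_isCycle_and_support_count_tail_eq_one,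
    Walk.isCycle_iff_isPath_tail_and_le_length]
  have hplen : p.length = t.length + 1 := by
    rw [← Nat.add_right_cancel_iff, ← Walk.length_support, ← Walk.cons_tail_support, hp]; simp
  have hnil : ¬ p.Nil := by rw [← Walk.length_eq_zero_iff]; omega
  refine ⟨⟨?_, by simp only [List.length_cons] at hlen; omega⟩, fun v ↦ ?_⟩
  · rw [Walk.isPath_def, Walk.support_tail_of_not_nil _ hnil, hp]
    exact hnd'
  · rw [hp]
    exact List.count_eq_one_of_mem hnd' (by simpa [or_comm] using hl v)

theorem exists_isCycleList_forall_length_le [Fintype V] {l : List V} (h : G.IsCycleList l) :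
    ∃ C, G.IsCycleList C ∧ ∀ l, G.IsCycleList l → l.length ≤ C.length := by
  have hfin : {l : List V | l.Nodup}.Finite :=
    Set.finite_coe_iff.mp (inferInstanceAs (Finite {l : List V // l.Nodup}))
  exact Set.exists_max_image _ List.length (hfin.subset fun _ hl ↦ hl.2.1) ⟨l, h⟩

theorem exists_isCycle_of_two_le_degree [Fintype V] [DecidableRel G.Adj] (hG : G.Connected)
    (hdeg : ∀ v, 2 ≤ G.degree v) : ∃ u, ∃ p : G.Walk u u, p.IsCycle := by
  by_contra! hacyc
  obtain ⟨v⟩ := hG.nonempty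
  have : Nontrivial V := by
    obtain ⟨w, hw⟩ :=
      (G.degree_pos_iff_exists_adj v).mp (by linarith [hdeg v] : 0 < G.degree v)
    exact ⟨v, w, hw.ne⟩
  obtain ⟨u, hu⟩ := IsTree.exists_vert_degree_one_of_nontrivial ⟨hG, fun _ c ↦ hacyc _ c⟩
  linarith [hdeg u]

section Detour

variable {l l' P T X Y : List V} {c d c' d' : V}

theorem IsCycleList.of_isRotated (h : G.IsCycleList l) (hr : l ~r l') : G.IsCycleList l' :=
  ⟨hr.perm.length_eq ▸ h.1, hr.nodup_iff.mp h.2.1, Cycle.coe_eq_coe.mpr hr ▸ h.2.2⟩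

def IsDetour (G : SimpleGraph V) (l : List V) (c d : V) (P : List V) : Prop :=
  P ≠ [] ∧ P.Nodup ∧ (∀ z ∈ P, z ∉ l) ∧ (c :: P ++ [d]).IsChain G.Adj

theorem IsCycleList.insert_detour (h : G.IsCycleList (c :: d :: T))
    (hP : G.IsDetour (c :: d :: T) c d P) : G.IsCycleList (c :: P ++ d :: T) := by
  classical
  obtain ⟨hlen, hnd, hch⟩ := h
  obtain ⟨-, hPnd, hPl, hPch⟩ := hP
  refine ⟨by simp only [List.length_cons, List.length_append] at hlen ⊢; omega, ?_, ?_⟩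
  · have hperm : (c :: P ++ d :: T).Perm ((c :: d :: T) ++ P) := by
      simp only [List.perm_iff_count, List.count_append, List.count_cons]; intro; omega
    exact hperm.nodup_iff.mpr (hnd.append hPnd fun z hz hzP ↦ hPl z hzP hz)
  · rw [Cycle.chain_coe_cons] at hch
    rw [List.cons_append, Cycle.chain_coe_cons, List.append_assoc, List.cons_append,
      ← List.cons_append, List.isChain_split]
    exact ⟨hPch, hch.tail⟩

theorem IsCycleList.insert_detour_crossing (h : G.IsCycleList (c :: c' :: (X ++ d :: d' :: Y)))
    (hP : G.IsDetour (c :: c' :: (X ++ d :: d' :: Y)) c d P) (hadj : G.Adj c' d') :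
    G.IsCycleList (c :: P ++ d :: (X.reverse ++ c' :: d' :: Y)) := by
  classical
  obtain ⟨hlen, hnd, hch⟩ := h
  obtain ⟨-, hPnd, hPl, hPch⟩ := hP
  refine ⟨by simp only [List.length_cons, List.length_append] at hlen ⊢; omega, ?_, ?_⟩
  · have hperm : (c :: P ++ d :: (X.reverse ++ c' :: d' :: Y)).Perm
        ((c :: c' :: (X ++ d :: d' :: Y)) ++ P) := by
      simp only [List.perm_iff_count, List.count_append, List.count_cons, List.count_reverse]
      intro; omega
    exact hperm.nodup_iff.mpr (hnd.append hPnd fun z hz hzP ↦ hPl z hzP hz)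
  · rw [Cycle.chain_coe_cons] at hch
    simp only [List.cons_append, List.append_assoc, List.isChain_cons_cons] at hch
    obtain ⟨hcX, hdY⟩ := List.isChain_cons_split.mp hch.2
    have hXrev : (d :: (X.reverse ++ [c'])).IsChain G.Adj := by
      simpa using List.isChain_reverse.mpr (List.IsChain.imp (fun _ _ h ↦ h.symm) hcX)
    rw [List.cons_append, Cycle.chain_coe_cons]
    simp only [List.cons_append, List.append_assoc]
    rw [List.isChain_cons_split (l₁ := P), List.isChain_cons_split (l₁ := X.reverse),
      List.isChain_cons_cons]
    exact ⟨hPch, hXrev, hadj, hdY.tail⟩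

theorem IsDetour.of_isRotated (hP : G.IsDetour l c d P) (hr : l ~r l') : G.IsDetour l' c d P :=
  ⟨hP.1, hP.2.1, fun z hz ↦ hr.mem_iff.not.mp (hP.2.2.1 z hz), hP.2.2.2⟩

variable [DecidableEq V]

theorem IsCycleList.exists_longer_of_isDetour_next (h : G.IsCycleList l) (hc : c ∈ l)
    (hP : G.IsDetour l c (l.next c hc) P) : ∃ l', G.IsCycleList l' ∧ l.length < l'.length := by
  obtain ⟨T, hT⟩ := List.exists_isRotated_cons_next h.2.1 (by linarith [h.1]) hc
  refine ⟨_, (h.of_isRotated hT).insert_detour (hP.of_isRotated hT), ?_⟩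
  have := List.length_pos_iff.mpr hP.1
  simp only [hT.perm.length_eq, List.length_cons, List.length_append]
  omega

theorem IsCycleList.exists_longer_of_isDetour_of_adj_next (h : G.IsCycleList l) (hc : c ∈ l)
    (hd : d ∈ l) (hcd : c ≠ d) (hcd' : l.next c hc ≠ d) (hdc' : l.next d hd ≠ c)
    (hP : G.IsDetour l c d P) (hadj : G.Adj (l.next c hc) (l.next d hd)) :
    ∃ l', G.IsCycleList l' ∧ l.length < l'.length := by
  obtain ⟨X, Y, hXY⟩ :=
    List.exists_isRotated_cons_next_append_cons_next h.2.1 (by linarith [h.1]) hc hd hcd hcd' hdc'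
  refine ⟨_, (h.of_isRotated hXY).insert_detour_crossing (hP.of_isRotated hXY) hadj, ?_⟩
  have := List.length_pos_iff.mpr hP.1
  simp only [hXY.perm.length_eq, List.length_cons, List.length_append, List.length_reverse]
  omega

end Detour

section ReachableAvoiding

def reachableAvoiding (G : SimpleGraph V) (l : List V) (h : V) : Set V :=
  {z | ∃ p : G.Walk h z, ∀ w ∈ p.support, w ∉ l}

variable {l : List V} {c d h z z' : V}

theorem mem_reachableAvoiding_self (hh : h ∉ l) : h ∈ G.reachableAvoiding l h :=
  ⟨Walk.nil, by simpa⟩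

theorem notMem_of_mem_reachableAvoiding (hz : z ∈ G.reachableAvoiding l h) : z ∉ l :=
  let ⟨p, hp⟩ := hz
  hp z p.end_mem_support

theorem mem_reachableAvoiding_of_adj (hz : z ∈ G.reachableAvoiding l h) (hadj : G.Adj z z')
    (hz' : z' ∉ l) : z' ∈ G.reachableAvoiding l h := by
  obtain ⟨p, hp⟩ := hz
  refine ⟨p.concat hadj, fun w hw ↦ ?_⟩
  rw [Walk.support_concat, List.mem_append, List.mem_singleton] at hw
  rcases hw with hw | rfl
  exacts [hp w hw, hz']

variable [DecidableEq V]

theorem exists_isDetour (hz : z ∈ G.reachableAvoiding l h) (hz' : z' ∈ G.reachableAvoiding l h)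
    (hcz : G.Adj c z) (hz'd : G.Adj z' d) : ∃ P, G.IsDetour l c d P := by
  obtain ⟨p, hp⟩ := hz
  obtain ⟨p', hp'⟩ := hz'
  set q := (p.reverse.append p').bypass
  refine ⟨q.support, q.support_ne_nil, p.reverse.append p' |>.bypass_isPath.support_nodup,
    fun w hw ↦ ?_, ?_⟩
  · rcases (Walk.mem_support_append_iff _ _).mp
      ((p.reverse.append p').support_bypass_subset_support hw) with hw | hw
    exacts [hp w (by simpa using hw), hp' w hw]
  · simpa [Walk.support_concat] using (Walk.cons hcz (q.concat hz'd)).isChain_adj_support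

theorem IsCycleList.not_adj_next_of_forall_length_le {C : List V} (hC : G.IsCycleList C)
    (hmax : ∀ l, G.IsCycleList l → l.length ≤ C.length) (hc : c ∈ C)
    (hz : z ∈ G.reachableAvoiding C h) (hz' : z' ∈ G.reachableAvoiding C h) (hcz : G.Adj c z) :
    ¬ G.Adj z' (C.next c hc) := fun hadj ↦ by
  obtain ⟨P, hP⟩ := exists_isDetour hz hz' hcz hadj
  obtain ⟨l, hl, hlen⟩ := hC.exists_longer_of_isDetour_next hc hP
  exact (hmax l hl).not_gt hlen

theorem IsCycleList.not_adj_next_next_of_forall_length_le {C : List V} (hC : G.IsCycleList C)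
    (hmax : ∀ l, G.IsCycleList l → l.length ≤ C.length) (hc : c ∈ C) (hd : d ∈ C) (hcd : c ≠ d)
    (hz : z ∈ G.reachableAvoiding C h) (hz' : z' ∈ G.reachableAvoiding C h) (hcz : G.Adj c z)
    (hdz' : G.Adj d z') : ¬ G.Adj (C.next c hc) (C.next d hd) := fun hadj ↦ by
  have hcd' : C.next c hc ≠ d := fun he ↦
    hC.not_adj_next_of_forall_length_le hmax hc hz hz' hcz (he ▸ hdz'.symm)
  have hdc' : C.next d hd ≠ c := fun he ↦
    hC.not_adj_next_of_forall_length_le hmax hd hz' hz hdz' (he ▸ hcz.symm)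
  obtain ⟨P, hP⟩ := exists_isDetour hz hz' hcz hdz'.symm
  obtain ⟨l, hl, hlen⟩ :=
    hC.exists_longer_of_isDetour_of_adj_next hc hd hcd hcd' hdc' hP hadj
  exact (hmax l hl).not_gt hlen

end ReachableAvoiding

end SimpleGraph

namespace KConnected

open SimpleGraph

variable {V : Type*} [Fintype V] {G : SimpleGraph V} {k : ℕ}

theorem le_card_of_forall_walk_meets (hG : KConnected k G) (S : Finset V) {u v : V}
    (hu : u ∉ S) (hv : v ∉ S) (hS : ∀ p : G.Walk u v, ∃ w ∈ p.support, w ∈ S) : k ≤ #S := by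
  by_contra! hlt
  obtain ⟨p⟩ := (hG.2 S hlt).preconnected ⟨u, hu⟩ ⟨v, hv⟩
  obtain ⟨w, hw, hwS⟩ := hS (p.map (Embedding.induce _).toHom)
  obtain ⟨w, -, rfl⟩ := List.mem_map.mp (Walk.support_map _ p ▸ hw)
  exact w.2 hwS

theorem connected (hG : KConnected k G) (hk : 1 ≤ k) : G.Connected := by
  have : Nonempty V := Fintype.card_pos_iff.mp (by linarith [hG.1])
  refine ⟨fun u v ↦ ?_⟩
  by_contra huv
  have := hG.le_card_of_forall_walk_meets ∅ (notMem_empty u) (notMem_empty v)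
    fun p ↦ (huv ⟨p⟩).elim
  rw [card_empty] at this
  omega

theorem le_degree [DecidableRel G.Adj] (hG : KConnected k G) (v : V) : k ≤ G.degree v := by
  classical
  rw [← card_neighborFinset_eq_degree]
  by_contra! hlt
  obtain ⟨w, hw⟩ : ∃ w, w ∉ insert v (G.neighborFinset v) := by
    by_contra! hall
    have := card_le_card fun w (_ : w ∈ univ) ↦ hall w
    have := card_insert_le v (G.neighborFinset v)
    rw [card_univ] at *
    linarith [hG.1]
  rw [mem_insert, not_or] at hw
  refine hlt.not_ge <|
    hG.le_card_of_forall_walk_meets _ (notMem_neighborFinset_self G v) hw.2 fun p ↦ ?_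
  cases p with
  | nil => exact absurd rfl hw.1
  | cons hadj q =>
    exact ⟨_, List.mem_cons_of_mem _ q.start_mem_support, by simpa using hadj⟩

theorem le_card_of_reachableAvoiding [DecidableEq V] (hG : KConnected k G) {l : List V}
    {S : Finset V} {h v : V} (hh : h ∉ l) (hhS : h ∉ S) (hv : v ∈ l) (hvS : v ∉ S)
    (hS : ∀ c ∈ l, ∀ z ∈ G.reachableAvoiding l h, G.Adj z c → c ∈ S) : k ≤ #S := by
  refine hG.le_card_of_forall_walk_meets S hhS hvS fun p ↦ ?_
  obtain ⟨d, hd, hfst, hsnd⟩ := p.exists_boundary_dart _ (mem_reachableAvoiding_self hh)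
    fun hv' ↦ notMem_of_mem_reachableAvoiding hv' hv
  refine ⟨d.snd, p.dart_snd_mem_support_of_mem_darts hd, hS _ ?_ _ hfst d.adj⟩
  by_contra hl
  exact hsnd (mem_reachableAvoiding_of_adj hfst d.adj hl)

theorem two_le_degree [DecidableRel G.Adj] (hG : KConnected k G)
    (hα : ∀ I : Finset V, G.IsIndepSet I → #I ≤ k) (hn : 3 ≤ Fintype.card V) (v : V) :
    2 ≤ G.degree v := by
  classical
  rcases le_or_gt 2 k with hk | hk
  · exact hk.trans (hG.le_degree v)
  have hadj : ∀ w ≠ v, G.Adj v w := fun w hw ↦ by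
    by_contra hvw
    have := hα {v, w} <| by
      rw [coe_pair, isIndepSet_iff, Set.pairwise_pair]
      exact fun _ ↦ ⟨hvw, fun h ↦ hvw h.symm⟩
    rw [card_pair hw.symm] at this
    omega
  rw [← card_neighborFinset_eq_degree]
  calc 2 ≤ #(univ.erase v) := by rw [card_erase_of_mem (mem_univ v), card_univ]; omega
    _ ≤ _ := card_le_card fun w hw ↦
      (mem_neighborFinset _ _ _).mpr (hadj w (ne_of_mem_erase hw))

end KConnected

namespace SimpleGraph

variable {V : Type*} {G : SimpleGraph V}

theorem IsCycleList.forall_mem_of_forall_length_le [Fintype V] [DecidableEq V] {k : ℕ}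
    {C : List V} (hG : KConnected k G) (hα : ∀ I : Finset V, G.IsIndepSet I → #I ≤ k)
    (hC : G.IsCycleList C) (hmax : ∀ l, G.IsCycleList l → l.length ≤ C.length) (v : V) :
    v ∈ C := by
  classical
  by_contra hv
  set R := G.reachableAvoiding C v
  have hvR : v ∈ R := mem_reachableAvoiding_self hv
  set A := {c ∈ C.toFinset | ∃ z ∈ R, G.Adj c z} with hA
  have hmemA : ∀ {c}, c ∈ A ↔ c ∈ C ∧ ∃ z ∈ R, G.Adj c z := by simp [hA]
  set σ : V → V := fun c ↦ if hc : c ∈ C then C.next c hc else c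
  have hσ : ∀ c (hc : c ∈ C), σ c = C.next c hc := fun c hc ↦ dif_pos hc
  have hσA : ∀ c ∈ A, σ c ∉ A := by
    intro c hc hσc
    obtain ⟨hcC, z, hz, hcz⟩ := hmemA.mp hc
    obtain ⟨-, z', hz', hσz'⟩ := hmemA.mp hσc
    exact hC.not_adj_next_of_forall_length_le hmax hcC hz hz' hcz (hσ c hcC ▸ hσz'.symm)
  have hkA : k ≤ #A := by
    obtain ⟨u, huC, huA⟩ : ∃ u ∈ C, u ∉ A := by
      obtain ⟨c, hc⟩ := List.exists_mem_of_length_pos (by linarith [hC.1] : 0 < C.length)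
      by_cases hcA : c ∈ A
      · exact ⟨σ c, hσ c hc ▸ C.next_mem c hc, hσA c hcA⟩
      · exact ⟨c, hc, hcA⟩
    exact hG.le_card_of_reachableAvoiding hv (fun hvA ↦ hv (hmemA.mp hvA).1) huC huA
      fun c hc z hz hzc ↦ hmemA.mpr ⟨hc, z, hz, hzc.symm⟩
  have hσinj : Set.InjOn σ A := fun c hc d hd h ↦ by
    rw [hσ c (hmemA.mp hc).1, hσ d (hmemA.mp hd).1] at h
    exact List.eq_of_next_eq hC.2.1 _ _ h
  have hvA : v ∉ A.image σ := fun hvA ↦ by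
    obtain ⟨c, hc, rfl⟩ := mem_image.mp hvA
    exact hv (hσ c (hmemA.mp hc).1 ▸ C.next_mem c (hmemA.mp hc).1)
  have hI : G.IsIndepSet ↑(insert v (A.image σ)) := by
    rw [isIndepSet_iff, coe_insert, coe_image, Set.pairwise_insert, hσinj.pairwise_image]
    refine ⟨fun c hc d hd hcd ↦ ?_, ?_⟩
    · obtain ⟨hcC, z, hz, hcz⟩ := hmemA.mp hc
      obtain ⟨hdC, z', hz', hdz'⟩ := hmemA.mp hd
      simp only [Function.onFun, hσ c hcC, hσ d hdC]
      exact hC.not_adj_next_next_of_forall_length_le hmax hcC hdC hcd hz hz' hcz hdz'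
    · rintro _ ⟨c, hc, rfl⟩ -
      obtain ⟨hcC, z, hz, hcz⟩ := hmemA.mp hc
      have := hσ c hcC ▸ hC.not_adj_next_of_forall_length_le hmax hcC hz hvR hcz
      exact ⟨this, fun h ↦ this h.symm⟩
  have := hα _ hI
  rw [card_insert_of_notMem hvA, card_image_of_injOn hσinj] at this
  omega

end SimpleGraph

theorem chvatal_erdos
    {V : Type*} [Fintype V] [DecidableEq V] (G : SimpleGraph V)
    (k : ℕ) (hconn : KConnected k G) (hn : 3 ≤ Fintype.card V)
    (hindep : ∀ I : Finset V, (∀ u ∈ I, ∀ v ∈ I, ¬ G.Adj u v) → I.card ≤ k) :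
    G.IsHamiltonian := by
  classical
  have hα : ∀ I : Finset V, G.IsIndepSet I → #I ≤ k := fun I hI ↦
    hindep I fun u hu v hv ↦ by
      rcases eq_or_ne u v with rfl | huv
      exacts [G.irrefl, hI hu hv huv]
  obtain ⟨v⟩ : Nonempty V := Fintype.card_pos_iff.mp (by omega)
  have hk : 1 ≤ k := by simpa using hα {v} (by simp)
  obtain ⟨u, p, hp⟩ := SimpleGraph.exists_isCycle_of_two_le_degree (hconn.connected hk)
    (hconn.two_le_degree hα hn)
  obtain ⟨C, hC, hmax⟩ :=
    SimpleGraph.exists_isCycleList_forall_length_le hp.isCycleList_support_tail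
  exact hC.isHamiltonian (hC.forall_mem_of_forall_length_le hconn hα hmax)
end

section
/- (Chvátal–Erdős, path version) Let G be a k-connected graph of order n. If the independence number of G is at most k + 1, then G is traceable. -/
/-!
Take a longest path `u ⋯`, stored as its vertex list, and suppose it misses a vertex `h`. Let `R`
be the set of vertices reachable from `h` off the path and `S` the set of path vertices with a
neighbour in `R`. The head `u` has no neighbour in `R`, so `S` separates `h` from `u` and
`|S| ≥ k`. Every `x ∈ S` has a successor `x⁺` on the path, and maximality of the path forbids the
edges `u x⁺` (reverse the path up to `x` and prepend a vertex of `R`), `x⁺ r` with `r ∈ R` (insert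
a detour through `R` after `x`) and `x⁺ y⁺` (leave the path at `x`, cross `R`, come back at `y`
and run backwards to `x⁺`). Hence `{h, u} ∪ {x⁺ | x ∈ S}` is independent, of size
`|S| + 2 ≥ k + 2`.
-/

open Finset

/-- `G` is traceable: it has a Hamiltonian path. -/
def IsTraceable {V : Type*} [DecidableEq V] (G : SimpleGraph V) : Prop :=
  ∃ (u v : V) (p : G.Walk u v), p.IsHamiltonian

namespace List
variable {α : Type*} {l : List α} {a b c d : α}

theorem exists_eq_append_of_infix_of_infix (hab : [a, b] <:+: l) (hcd : [c, d] <:+: l)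
    (hac : a ≠ c) (hbc : b ≠ c) (hda : d ≠ a) :
    (∃ s m t, l = s ++ a :: b :: (m ++ c :: d :: t)) ∨
      ∃ s m t, l = s ++ c :: d :: (m ++ a :: b :: t) := by
  obtain ⟨s₁, t₁, rfl⟩ := hab
  obtain ⟨s₂, t₂, h⟩ := hcd
  simp only [cons_append, nil_append, append_assoc] at h ⊢
  rcases append_eq_append_iff.1 h with ⟨m, rfl, hm⟩ | ⟨m, rfl, hm⟩ <;>
    rcases m with _ | ⟨_, _ | ⟨_, m⟩⟩ <;> simp only [nil_append, cons_append, cons.injEq] at hm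
  · exact absurd hm.1.symm hac
  · exact absurd hm.2.1 hda
  · obtain ⟨rfl, rfl, rfl⟩ := hm
    exact Or.inr ⟨s₂, m, t₁, by simp⟩
  · exact absurd hm.1 hac
  · exact absurd hm.2.1 hbc
  · obtain ⟨rfl, rfl, rfl⟩ := hm
    exact Or.inl ⟨s₁, m, t₂, by simp⟩

theorem Nodup.ne_head_of_infix {u : α} (hn : (u :: l).Nodup) (hab : [a, b] <:+: u :: l) :
    b ≠ u := by
  have hb : b ∈ l := by
    obtain ⟨_ | ⟨_, s⟩, t, hst⟩ := hab <;>
      simp only [nil_append, cons_append, cons.injEq] at hst <;> simp [← hst.2]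
  exact fun hbu => (nodup_cons.1 hn).1 (hbu ▸ hb)

theorem Nodup.eq_of_infix_of_infix (hn : l.Nodup) (hab : [a, b] <:+: l) (hcb : [c, b] <:+: l) :
    a = c := by
  obtain ⟨s₁, t₁, rfl⟩ := hab
  obtain ⟨s₂, t₂, h⟩ := hcb
  have hn' : ((s₁ ++ [a]) ++ b :: t₁).Nodup := by simpa using hn
  rw [nodup_middle, nodup_cons, mem_append] at hn'
  have := (append_cons_inj_of_notMem (not_or.1 hn'.1).1 (not_or.1 hn'.1).2).1
    (show (s₁ ++ [a]) ++ b :: t₁ = (s₂ ++ [c]) ++ b :: t₂ by simpa using h.symm)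
  simpa using (append_inj' this.1 rfl).2

end List

namespace SimpleGraph
variable {V : Type*} {G : SimpleGraph V}

theorem isChain_adj_reverse {l : List V} : l.reverse.IsChain G.Adj ↔ l.IsChain G.Adj := by
  simp only [List.isChain_reverse, G.adj_comm]

variable (G) in
def reachableWithin (s : Set V) (a : V) : Set V :=
  {b | ∃ p : G.Walk a b, ∀ z ∈ p.support, z ∈ s}

section reachableWithin
variable {s : Set V} {a b c x y : V}

theorem mem_reachableWithin_self (ha : a ∈ s) : a ∈ G.reachableWithin s a :=
  ⟨.nil, by simpa using ha⟩

theorem reachableWithin_subset : G.reachableWithin s a ⊆ s :=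
  fun _ ⟨p, hp⟩ => hp _ p.end_mem_support

theorem mem_reachableWithin_of_adj (hb : b ∈ G.reachableWithin s a) (hbc : G.Adj b c)
    (hc : c ∈ s) : c ∈ G.reachableWithin s a := by
  obtain ⟨p, hp⟩ := hb
  refine ⟨p.concat hbc, fun z hz => ?_⟩
  rw [Walk.support_concat, List.mem_append, List.mem_singleton] at hz
  exact hz.elim (hp z) (· ▸ hc)

theorem exists_isChain_of_mem_reachableWithin (hb : b ∈ G.reachableWithin s a)
    (hc : c ∈ G.reachableWithin s a) (hxb : G.Adj x b) (hcy : G.Adj c y) :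
    ∃ r ≠ [], (x :: r ++ [y]).IsChain G.Adj ∧ r.Nodup ∧ ∀ z ∈ r, z ∈ s := by
  classical
  obtain ⟨p, hp⟩ := hb
  obtain ⟨q, hq⟩ := hc
  let w := (p.reverse.append q).bypass
  refine ⟨w.support, w.support_ne_nil, ?_, (p.reverse.append q).bypass_isPath.support_nodup,
    fun z hz => ?_⟩
  · simpa using ((w.concat hcy).cons hxb).isChain_adj_support
  · have := (p.reverse.append q).support_bypass_subset_support hz
    rw [Walk.mem_support_append_iff, Walk.support_reverse, List.mem_reverse] at this
    exact this.elim (hp z) (hq z)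

end reachableWithin

def IsLongestPathList (G : SimpleGraph V) (L : List V) : Prop :=
  L.IsChain G.Adj ∧ L.Nodup ∧ ∀ l : List V, l.IsChain G.Adj → l.Nodup → l.length ≤ L.length

namespace IsLongestPathList
variable {L A M B r : List V} {u x y h x₁ y₁ x₂ y₂ : V}

/-- Every extension argument below is an instance of this move: splice a new segment `r` in
after `A` and traverse `M` backwards. -/
theorem eq_nil_of_isChain (hL : G.IsLongestPathList (A ++ M ++ B))
    (hl : (A ++ r ++ M.reverse ++ B).IsChain G.Adj) (hr : r.Nodup)
    (hrL : ∀ z ∈ r, z ∉ A ++ M ++ B) : r = [] := by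
  classical
  have hperm : (A ++ r ++ M.reverse ++ B).Perm (r ++ (A ++ M ++ B)) := by
    rw [List.perm_iff_count]; intro a; simp only [List.count_append, List.count_reverse]; omega
  have hnodup := hperm.nodup_iff.2 <| List.nodup_append.2
    ⟨hr, hL.2.1, fun a ha b hb hab => hrL a ha (hab ▸ hb)⟩
  have hlen := hL.2.2 _ hl hnodup
  rw [hperm.length_eq, List.length_append] at hlen
  exact List.eq_nil_of_length_eq_zero (by omega)

theorem not_adj_head (hL : G.IsLongestPathList (u :: L)) (hh : h ∉ u :: L) : ¬ G.Adj u h := by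
  intro huh
  have := eq_nil_of_isChain (A := []) (M := []) (r := [h]) (by simpa using hL)
    (by simpa [huh.symm] using hL.1) (List.nodup_singleton h) (by simpa using hh)
  exact List.cons_ne_nil _ _ this

theorem exists_infix_of_adj (hL : G.IsLongestPathList L) (hx : x ∈ L) (hh : h ∉ L)
    (hxh : G.Adj x h) : ∃ y, [x, y] <:+: L := by
  obtain ⟨s, t, rfl⟩ := List.append_of_mem hx
  rcases t with _ | ⟨y, t⟩
  · have := eq_nil_of_isChain (A := s ++ [x]) (M := []) (B := []) (r := [h]) (by simpa using hL)
      (by simpa [hxh] using hL.1) (List.nodup_singleton h) (by simpa using hh)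
    exact absurd this (List.cons_ne_nil _ _)
  · exact ⟨y, s, t, by simp⟩

theorem not_adj_head_of_infix (hL : G.IsLongestPathList (u :: L)) (hxy : [x, y] <:+: u :: L)
    (hh : h ∉ u :: L) (hxh : G.Adj x h) : ¬ G.Adj u y := by
  intro huy
  obtain ⟨_ | ⟨u, s⟩, t, hst⟩ := hxy
  · simp only [List.nil_append, List.cons_append, List.cons.injEq] at hst
    exact hL.not_adj_head hh (hst.1 ▸ hxh)
  · simp only [List.cons_append, List.cons.injEq, List.append_assoc, List.nil_append] at hst
    obtain ⟨rfl, rfl⟩ := hst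
    have hc := hL.1
    simp only [List.isChain_cons_append_cons_cons] at hc
    have := eq_nil_of_isChain (A := []) (M := u :: s ++ [x]) (B := y :: t) (r := [h])
      (by simpa using hL) ?_ (List.nodup_singleton h) (by simpa using hh)
    · exact absurd this (List.cons_ne_nil _ _)
    · simpa [hxh.symm, huy, hc.2.2] using isChain_adj_reverse.2 hc.1

theorem eq_nil_of_infix (hL : G.IsLongestPathList L) (hxy : [x, y] <:+: L)
    (hr : (x :: r ++ [y]).IsChain G.Adj) (hrn : r.Nodup) (hrL : ∀ z ∈ r, z ∉ L) : r = [] := by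
  obtain ⟨s, t, rfl⟩ := hxy
  have hc := hL.1
  simp only [List.append_assoc, List.cons_append, List.nil_append,
    List.isChain_append_cons_cons] at hc
  refine eq_nil_of_isChain (A := s ++ [x]) (M := []) (B := y :: t) (by simpa using hL) ?_ hrn
    (by simpa using hrL)
  simp only [List.append_assoc, List.cons_append, List.nil_append, List.append_nil,
    List.reverse_nil]
  rw [List.isChain_split, List.isChain_cons_split]
  exact ⟨hc.1, by simpa using hr, hc.2.2⟩

theorem eq_nil_of_cross (hL : G.IsLongestPathList (A ++ x₁ :: y₁ :: (M ++ x₂ :: y₂ :: B)))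
    (hr : (x₁ :: r ++ [x₂]).IsChain G.Adj) (hrn : r.Nodup)
    (hrL : ∀ z ∈ r, z ∉ A ++ x₁ :: y₁ :: (M ++ x₂ :: y₂ :: B)) (hy : G.Adj y₁ y₂) : r = [] := by
  have hc := hL.1
  simp only [List.isChain_append_cons_cons, List.isChain_cons_append_cons_cons] at hc
  refine eq_nil_of_isChain (A := A ++ [x₁]) (M := y₁ :: M ++ [x₂]) (B := y₂ :: B)
    (by simpa using hL) ?_ hrn (by simpa using hrL)
  simp only [List.append_assoc, List.cons_append, List.nil_append, List.reverse_cons,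
    List.reverse_append, List.reverse_nil]
  rw [List.isChain_split, List.isChain_cons_split, List.isChain_cons_append_cons_cons]
  exact ⟨hc.1, by simpa using hr, by simpa using isChain_adj_reverse.2 hc.2.2.1, hy, hc.2.2.2.2⟩

theorem eq_nil_of_infix_of_infix (hL : G.IsLongestPathList L) (h₁ : [x₁, y₁] <:+: L)
    (h₂ : [x₂, y₂] <:+: L) (hx : x₁ ≠ x₂) (hr : (x₁ :: r ++ [x₂]).IsChain G.Adj) (hrn : r.Nodup)
    (hrL : ∀ z ∈ r, z ∉ L) (hy : G.Adj y₁ y₂) : r = [] := by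
  have hr' : (x₂ :: r.reverse ++ [x₁]).IsChain G.Adj := by simpa using isChain_adj_reverse.2 hr
  by_cases hyx₂ : y₁ = x₂
  · exact hL.eq_nil_of_infix h₁ (hyx₂ ▸ hr) hrn hrL
  by_cases hyx₁ : y₂ = x₁
  · exact List.reverse_eq_nil_iff.1 <|
      hL.eq_nil_of_infix h₂ (hyx₁ ▸ hr') (List.nodup_reverse.2 hrn) (by simpa using hrL)
  rcases List.exists_eq_append_of_infix_of_infix h₁ h₂ hx hyx₂ hyx₁ with
    ⟨s, m, t, rfl⟩ | ⟨s, m, t, rfl⟩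
  · exact hL.eq_nil_of_cross hr hrn hrL hy
  · exact List.reverse_eq_nil_iff.1 <|
      hL.eq_nil_of_cross hr' (List.nodup_reverse.2 hrn) (by simpa using hrL) hy.symm

end IsLongestPathList

theorem exists_isLongestPathList [Fintype V] [Nonempty V] (G : SimpleGraph V) :
    ∃ u L, G.IsLongestPathList (u :: L) := by
  classical
  let paths := univ.filter fun l : {l : List V // l.Nodup} => l.1.IsChain G.Adj
  obtain ⟨v⟩ := ‹Nonempty V›
  obtain ⟨⟨L, hLn⟩, hL, hmax⟩ := paths.exists_max_image (fun l => l.1.length)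
    ⟨⟨[v], List.nodup_singleton v⟩, by simp [paths]⟩
  have hL' : G.IsLongestPathList L :=
    ⟨(mem_filter.1 hL).2, hLn, fun l hc hn => hmax ⟨l, hn⟩ (by simpa [paths] using hc)⟩
  obtain _ | ⟨u, L⟩ := L
  · simpa using hL'.2.2 [v] (List.isChain_singleton v) (List.nodup_singleton v)
  · exact ⟨u, L, hL'⟩

theorem IsLongestPathList.isTraceable [DecidableEq V] {L : List V} (hL : G.IsLongestPathList L)
    (hne : L ≠ []) (hcover : ∀ v, v ∈ L) : IsTraceable G := by
  have hp : (Walk.ofSupport L hne hL.1).IsPath := by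
    rw [Walk.isPath_def, Walk.support_ofSupport]; exact hL.2.1
  exact ⟨_, _, _, hp.isHamiltonian_of_mem (by simpa using hcover)⟩


end SimpleGraph

theorem KConnected.le_card_of_separates {V : Type*} [Fintype V] {G : SimpleGraph V} {k : ℕ}
    (hG : KConnected k G) {S : Finset V} {T : Set V} {a b : V} (ha : a ∈ T) (hb : b ∉ T)
    (haS : a ∉ S) (hbS : b ∉ S) (hT : ∀ x ∈ T, ∀ y ∉ S, G.Adj x y → y ∈ T) : k ≤ #S := by
  by_contra! hS
  obtain ⟨w⟩ := (hG.2 S hS).preconnected ⟨a, haS⟩ ⟨b, hbS⟩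
  have key : ∀ {x y : ((S : Set V)ᶜ : Set V)}, (G.induce _).Walk x y → ↑x ∈ T → ↑y ∈ T := by
    intro x y w
    induction w with
    | nil => exact id
    | @cons _ y _ hxy _ ih => exact fun hx => ih (hT _ hx _ y.2 hxy)
  exact hb (key w ha)

namespace SimpleGraph.IsLongestPathList
variable {V : Type*} {G : SimpleGraph V} {u h : V} {L : List V}

theorem exists_attachments [Fintype V] {k : ℕ} (hG : KConnected k G)
    (hL : G.IsLongestPathList (u :: L)) (hh : h ∉ u :: L) :
    ∃ S : Finset V, k ≤ #S ∧
      ∀ x ∈ S, x ∈ u :: L ∧ ∃ b ∈ G.reachableWithin {v | v ∉ u :: L} h, G.Adj x b := by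
  classical
  set R := G.reachableWithin {v | v ∉ u :: L} h
  have hRL : ∀ b ∈ R, b ∉ u :: L := fun b hb => reachableWithin_subset hb
  refine ⟨(u :: L).toFinset.filter fun x => ∃ b ∈ R, G.Adj x b, ?_,
    fun x hx => by simpa using mem_filter.1 hx⟩
  refine hG.le_card_of_separates (mem_reachableWithin_self hh)
    (fun huR => hRL u huR (List.mem_cons_self ..))
    (fun hS => hh (by simpa using (mem_filter.1 hS).1)) (fun hS => ?_) fun x hx y hy hxy => ?_
  · obtain ⟨b, hb, hub⟩ := (mem_filter.1 hS).2
    exact hL.not_adj_head (hRL b hb) hub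
  · by_cases hyL : y ∈ u :: L
    · exact absurd (mem_filter.2 ⟨List.mem_toFinset.2 hyL, x, hx, hxy.symm⟩) hy
    · exact mem_reachableWithin_of_adj hx hxy hyL

theorem exists_independent (hL : G.IsLongestPathList (u :: L)) (hh : h ∉ u :: L) {S : Finset V}
    (hS : ∀ x ∈ S, x ∈ u :: L ∧ ∃ b ∈ G.reachableWithin {v | v ∉ u :: L} h, G.Adj x b) :
    ∃ I : Finset V, (∀ a ∈ I, ∀ b ∈ I, ¬ G.Adj a b) ∧ #S + 2 ≤ #I := by
  classical
  have hRL : ∀ b ∈ G.reachableWithin {v | v ∉ u :: L} h, b ∉ u :: L :=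
    fun b hb => reachableWithin_subset hb
  have hsucc : ∀ x ∈ S, ∃ y, [x, y] <:+: u :: L := fun x hx => by
    obtain ⟨hxL, b, hb, hxb⟩ := hS x hx
    exact hL.exists_infix_of_adj hxL (hRL b hb) hxb
  choose! f hf using hsucc
  have hfh : ∀ x ∈ S, ¬ G.Adj (f x) h := fun x hx hxh => by
    obtain ⟨b, hb, hxb⟩ := (hS x hx).2
    obtain ⟨r, hr, hrc, hrn, hrL⟩ :=
      exists_isChain_of_mem_reachableWithin hb (mem_reachableWithin_self hh) hxb hxh.symm
    exact hr (hL.eq_nil_of_infix (hf x hx) hrc hrn hrL)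
  have hfu : ∀ x ∈ S, ¬ G.Adj u (f x) := fun x hx => by
    obtain ⟨b, hb, hxb⟩ := (hS x hx).2
    exact hL.not_adj_head_of_infix (hf x hx) (hRL b hb) hxb
  have hff : ∀ x ∈ S, ∀ y ∈ S, x ≠ y → ¬ G.Adj (f x) (f y) := fun x hx y hy hxy hf' => by
    obtain ⟨b, hb, hxb⟩ := (hS x hx).2
    obtain ⟨c, hc, hyc⟩ := (hS y hy).2
    obtain ⟨r, hr, hrc, hrn, hrL⟩ := exists_isChain_of_mem_reachableWithin hb hc hxb hyc.symm
    exact hr (hL.eq_nil_of_infix_of_infix (hf x hx) (hf y hy) hxy hrc hrn hrL hf')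
  refine ⟨insert h (insert u (S.image f)), ?_, ?_⟩
  · simp only [mem_insert, mem_image]
    rintro a (rfl | rfl | ⟨x, hx, rfl⟩) b (rfl | rfl | ⟨y, hy, rfl⟩) hab
    exacts [hab.ne rfl, hL.not_adj_head hh hab.symm, hfh y hy hab.symm, hL.not_adj_head hh hab,
      hab.ne rfl, hfu y hy hab, hfh x hx hab, hfu x hx hab.symm,
      hff x hx y hy (fun hxy => hab.ne (congrArg f hxy)) hab]
  · have hinj : Set.InjOn f S := fun x hx y hy hxy =>
      hL.2.1.eq_of_infix_of_infix (hf x hx) (hxy ▸ hf y hy)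
    have hu : u ∉ S.image f := by
      simpa using fun x hx => hL.2.1.ne_head_of_infix (hf x hx)
    have hh' : h ∉ insert u (S.image f) := by
      simpa using ⟨fun hhu => hh (hhu ▸ List.mem_cons_self ..),
        fun x hx hfx => hh (hfx ▸ (hf x hx).subset (by simp))⟩
    rw [card_insert_of_notMem hh', card_insert_of_notMem hu, card_image_of_injOn hinj]

end SimpleGraph.IsLongestPathList

theorem chvatal_erdos_traceable
    {V : Type*} [Fintype V] [DecidableEq V] (G : SimpleGraph V)
    (k : ℕ) (hconn : KConnected k G)
    (hindep : ∀ I : Finset V, (∀ u ∈ I, ∀ v ∈ I, ¬ G.Adj u v) → I.card ≤ k + 1) :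
    IsTraceable G := by
  have : Nonempty V := Fintype.card_pos_iff.1 (by have := hconn.1; omega)
  obtain ⟨u, L, hL⟩ := G.exists_isLongestPathList
  by_cases hcover : ∀ v, v ∈ u :: L
  · exact hL.isTraceable (List.cons_ne_nil u L) hcover
  obtain ⟨h, hh⟩ := not_forall.1 hcover
  obtain ⟨S, hSk, hS⟩ := hL.exists_attachments hconn hh
  obtain ⟨I, hI, hcard⟩ := hL.exists_independent hh hS
  have := hindep I hI
  omega
end

section
/- Let G be a finite simple graph with n vertices, e edges, independence number β, minimum degree δ ≥ 1 and maximum degree Δ. If equality holds in M₁(G) = (n − β)Δ² + (e(δ + n − β))²/(4δ(n − β)β) and I is a maximum independent set, then G is bipartite with parts I and V \ I, and every vertex of V \ I has degree Δ. -/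
/-! Let `I` be independent with `r = #Iᶜ`. Every `v ∈ I` has all its neighbours outside `I`, so
`δ ≤ d(v) ≤ r` and hence `d(v)² ≤ (δ + r) d(v) - δ r`. Summing over `I` and applying
`x - c ≤ x² / (4c)` bounds `∑_{v ∈ I} d(v)²` by `(s (δ + r))² / (4 δ r β)`, where
`s = ∑_{v ∈ I} d(v)` counts the edges meeting `I`, so `s ≤ e`. With
`∑_{v ∉ I} d(v)² ≤ r Δ²` this gives the bound, and equality forces `s = e` (every edge meets
`I`, which is independent) and `d(v) = Δ` for all `v ∉ I`. -/

open Finset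

section Inequalities

variable {α : Type*} [Field α] [LinearOrder α] [IsStrictOrderedRing α]

lemma sq_le_add_mul_sub_mul_of_le_of_le {a b x : α} (ha : a ≤ x) (hb : x ≤ b) :
    x ^ 2 ≤ (a + b) * x - a * b := by
  nlinarith [mul_nonneg (sub_nonneg.2 ha) (sub_nonneg.2 hb)]

lemma sub_le_sq_div_four_mul {x c : α} (hc : 0 < c) : x - c ≤ x ^ 2 / (4 * c) := by
  rw [le_div_iff₀ (by positivity)]
  nlinarith [sq_nonneg (x - 2 * c)]

end Inequalities

namespace SimpleGraph

variable {V : Type*} [Fintype V] {G : SimpleGraph V} [DecidableRel G.Adj]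

variable (G) in
lemma sum_sq_degree_le_card_mul_maxDegree_sq (S : Finset V) :
    ∑ v ∈ S, G.degree v ^ 2 ≤ #S * G.maxDegree ^ 2 := by
  rw [← smul_eq_mul, ← sum_const]
  exact sum_le_sum fun v _ => Nat.pow_le_pow_left (G.degree_le_maxDegree v) 2

lemma degree_eq_maxDegree_of_sum_sq_eq {S : Finset V}
    (h : ∑ v ∈ S, G.degree v ^ 2 = #S * G.maxDegree ^ 2) {v : V} (hv : v ∈ S) :
    G.degree v = G.maxDegree := by
  rw [← smul_eq_mul, ← sum_const] at h
  exact Nat.pow_left_injective two_ne_zero <|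
    (sum_eq_sum_iff_of_le fun v _ => Nat.pow_le_pow_left (G.degree_le_maxDegree v) 2).mp h v hv

namespace IsIndepSet

variable [DecidableEq V] {I : Finset V}

lemma neighborFinset_subset_compl (hI : G.IsIndepSet (I : Set V)) {v : V} (hv : v ∈ I) :
    G.neighborFinset v ⊆ Iᶜ := by
  intro w hw
  rw [mem_neighborFinset] at hw
  exact mem_compl.mpr fun hwI => hI hv hwI hw.ne hw

lemma degree_le_card_compl (hI : G.IsIndepSet (I : Set V)) {v : V} (hv : v ∈ I) :
    G.degree v ≤ #Iᶜ := by
  rw [← card_neighborFinset_eq_degree]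
  exact card_le_card (hI.neighborFinset_subset_compl hv)

lemma compl_nonempty (hI : G.IsIndepSet (I : Set V)) (hδ : 0 < G.minDegree) (hI₀ : I.Nonempty) :
    Iᶜ.Nonempty := by
  obtain ⟨v, hv⟩ := hI₀
  exact card_pos.mp <| hδ.trans_le <| (G.minDegree_le_degree v).trans (hI.degree_le_card_compl hv)

lemma neighborFinset_between_compl (hI : G.IsIndepSet (I : Set V)) {v : V} (hv : v ∈ I) :
    (G.between I ↑Iᶜ).neighborFinset v = G.neighborFinset v := by
  ext w
  rw [mem_neighborFinset, mem_neighborFinset, between_adj]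
  refine ⟨And.left, fun h => ⟨h, .inl ⟨hv, ?_⟩⟩⟩
  exact hI.neighborFinset_subset_compl hv ((mem_neighborFinset ..).mpr h)

lemma sum_degree_eq_card_edgeFinset_between (hI : G.IsIndepSet (I : Set V)) :
    ∑ v ∈ I, G.degree v = #(G.between I ↑Iᶜ).edgeFinset := by
  rw [← isBipartiteWith_sum_degrees_eq_card_edges
    (between_isBipartiteWith (by simpa using disjoint_compl_right))]
  refine sum_congr rfl fun v hv => ?_
  simp_rw [← card_neighborFinset_eq_degree, hI.neighborFinset_between_compl hv]

lemma sum_degree_le_card_edgeFinset (hI : G.IsIndepSet (I : Set V)) :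
    ∑ v ∈ I, G.degree v ≤ #G.edgeFinset := by
  rw [hI.sum_degree_eq_card_edgeFinset_between]
  exact card_le_card (edgeFinset_subset_edgeFinset.mpr between_le)

lemma isBipartiteWith_of_sum_degree_eq (hI : G.IsIndepSet (I : Set V))
    (h : ∑ v ∈ I, G.degree v = #G.edgeFinset) :
    G.IsBipartiteWith I ↑Iᶜ := by
  have hsub := edgeFinset_subset_edgeFinset.mpr (between_le (G := G) (s := I) (t := ↑Iᶜ))
  have hG : G.between I ↑Iᶜ = G := edgeFinset_inj.mp <|
    eq_of_subset_of_card_le hsub (hI.sum_degree_eq_card_edgeFinset_between ▸ h.ge)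
  exact hG ▸ between_isBipartiteWith (by simpa using disjoint_compl_right)

lemma sum_sq_degree_le_sum_degree (hI : G.IsIndepSet (I : Set V)) (hδ : 0 < G.minDegree)
    (hI₀ : I.Nonempty) :
    ∑ v ∈ I, (G.degree v : ℝ) ^ 2 ≤
      ((∑ v ∈ I, (G.degree v : ℝ)) * (G.minDegree + #Iᶜ)) ^ 2 /
        (4 * G.minDegree * #Iᶜ * #I) := by
  have hIc := hI.compl_nonempty hδ hI₀
  calc ∑ v ∈ I, (G.degree v : ℝ) ^ 2
      ≤ ∑ v ∈ I, ((G.minDegree + #Iᶜ) * (G.degree v : ℝ) - G.minDegree * #Iᶜ) :=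
        sum_le_sum fun v hv => sq_le_add_mul_sub_mul_of_le_of_le
          (mod_cast G.minDegree_le_degree v) (mod_cast hI.degree_le_card_compl hv)
    _ = (∑ v ∈ I, (G.degree v : ℝ)) * (G.minDegree + #Iᶜ) - G.minDegree * #Iᶜ * #I := by
        rw [sum_sub_distrib, ← mul_sum, sum_const, nsmul_eq_mul]
        ring
    _ ≤ _ := by
        rw [mul_assoc 4, mul_assoc 4]
        exact sub_le_sq_div_four_mul (by simp [hδ, hIc.card_pos, hI₀.card_pos])

lemma sum_sq_degree_le_card_edgeFinset (hI : G.IsIndepSet (I : Set V)) (hδ : 0 < G.minDegree)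
    (hI₀ : I.Nonempty) :
    ∑ v ∈ I, (G.degree v : ℝ) ^ 2 ≤
      ((#G.edgeFinset : ℝ) * (G.minDegree + #Iᶜ)) ^ 2 / (4 * G.minDegree * #Iᶜ * #I) := by
  refine (hI.sum_sq_degree_le_sum_degree hδ hI₀).trans ?_
  gcongr
  exact_mod_cast hI.sum_degree_le_card_edgeFinset

lemma isBipartiteWith_of_sum_sq_degree_eq (hI : G.IsIndepSet (I : Set V))
    (hδ : 0 < G.minDegree) (hI₀ : I.Nonempty)
    (h : ∑ v ∈ I, (G.degree v : ℝ) ^ 2 =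
      ((#G.edgeFinset : ℝ) * (G.minDegree + #Iᶜ)) ^ 2 / (4 * G.minDegree * #Iᶜ * #I)) :
    G.IsBipartiteWith I ↑Iᶜ := by
  refine hI.isBipartiteWith_of_sum_degree_eq <|
    le_antisymm hI.sum_degree_le_card_edgeFinset ?_
  have hle := h ▸ hI.sum_sq_degree_le_sum_degree hδ hI₀
  have hIc := hI.compl_nonempty hδ hI₀
  rw [div_le_div_iff_of_pos_right (by simp [hδ, hIc.card_pos, hI₀.card_pos]),
    pow_le_pow_iff_left₀ (by positivity) (by positivity) two_ne_zero,
    mul_le_mul_iff_left₀ (by positivity)] at hle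
  exact_mod_cast hle

end IsIndepSet

end SimpleGraph

theorem zagreb_equality_case
    {V : Type*} [Fintype V] [DecidableEq V] [Nonempty V]
    (G : SimpleGraph V) [DecidableRel G.Adj]
    (n e δ Δ β : ℕ) (hn : n = Fintype.card V) (he : e = G.edgeFinset.card)
    (hδ : δ = G.minDegree) (hδ1 : 1 ≤ δ) (hΔ : Δ = G.maxDegree)
    (I : Finset V) (hI : ∀ u ∈ I, ∀ v ∈ I, ¬ G.Adj u v) (hIcard : I.card = β)
    (hβmax : ∀ J : Finset V, (∀ u ∈ J, ∀ v ∈ J, ¬ G.Adj u v) → J.card ≤ β)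
    (heq : ((∑ v, (G.degree v) ^ 2 : ℕ) : ℝ) =
      ((n : ℝ) - β) * Δ ^ 2 +
        ((e : ℝ) * ((δ : ℝ) + n - β)) ^ 2 / (4 * δ * ((n : ℝ) - β) * β)) :
    (∀ u v, G.Adj u v → (u ∈ I ∧ v ∉ I) ∨ (u ∉ I ∧ v ∈ I)) ∧
    (∀ v ∉ I, G.degree v = Δ) := by
  subst hn he hδ hΔ hIcard
  have hIndep : G.IsIndepSet (I : Set V) := fun u hu v hv _ => hI u hu v hv
  have hI₀ : I.Nonempty := card_pos.mp (by simpa using hβmax {Classical.arbitrary V} (by simp))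
  have hcompl : (Fintype.card V : ℝ) - #I = #Iᶜ := by
    rw [← card_add_card_compl I]; push_cast; ring
  have hsplit : ((∑ v, G.degree v ^ 2 : ℕ) : ℝ) =
      ∑ v ∈ I, (G.degree v : ℝ) ^ 2 + ((∑ v ∈ Iᶜ, G.degree v ^ 2 : ℕ) : ℝ) := by
    push_cast; rw [sum_add_sum_compl]
  rw [hsplit, add_sub_assoc, hcompl] at heq
  have hout : ((∑ v ∈ Iᶜ, G.degree v ^ 2 : ℕ) : ℝ) ≤ #Iᶜ * G.maxDegree ^ 2 := by
    exact_mod_cast G.sum_sq_degree_le_card_mul_maxDegree_sq Iᶜ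
  have hin := hIndep.sum_sq_degree_le_card_edgeFinset hδ1 hI₀
  refine ⟨fun u v huv => ?_,
    fun v hv => SimpleGraph.degree_eq_maxDegree_of_sum_sq_eq ?_ (mem_compl.mpr hv)⟩
  · have hbip := hIndep.isBipartiteWith_of_sum_sq_degree_eq hδ1 hI₀ (by linarith)
    simpa using hbip.mem_of_adj huv
  · exact_mod_cast
      (by linarith : ((∑ v ∈ Iᶜ, G.degree v ^ 2 : ℕ) : ℝ) = #Iᶜ * G.maxDegree ^ 2)
end

section
/- Let G be a finite simple bipartite graph with parts I and V \ I where |I| = β, |V \ I| = n − β, minimum degree δ with δ < n − β, and suppose every vertex of I has degree either δ or n − β, every vertex of V \ I has degree Δ, and |{x ∈ I : d(x) = n − β}| = δβ/(δ + n − β). Then the number of edges of G equals 2δβ(n − β)/(δ + n − β) and M₁(G) = (n − β)Δ² + δ(n − β)β. -/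
open Finset

theorem zagreb_extremal_bipartite
    {V : Type*} [Fintype V] [DecidableEq V] [Nonempty V]
    (G : SimpleGraph V) [DecidableRel G.Adj]
    (n δ Δ β : ℕ) (hn : n = Fintype.card V) (hβn : β ≤ n)
    (I : Finset V) (hIcard : I.card = β)
    (hbip : ∀ u v, G.Adj u v → (u ∈ I ∧ v ∉ I) ∨ (u ∉ I ∧ v ∈ I))
    (hδ : δ = G.minDegree) (hδlt : δ < n - β)
    (hdegI : ∀ u ∈ I, G.degree u = δ ∨ G.degree u = n - β)
    (hdegO : ∀ v ∉ I, G.degree v = Δ)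
    (hP : (I.filter fun x => G.degree x = n - β).card * (δ + (n - β)) = δ * β) :
    G.edgeFinset.card * (δ + (n - β)) = 2 * δ * β * (n - β) ∧
    (∑ v, (G.degree v) ^ 2) = (n - β) * Δ ^ 2 + δ * (n - β) * β := by
  classical
  set m := n - β with hm
  set P := I.filter fun x => G.degree x = n - β with hPdef
  set p := P.card with hpdef
  have hPsub : P ⊆ I := filter_subset _ _
  have hpβ : p ≤ β := hIcard ▸ card_le_card hPsub
  set q := β - p with hqdef
  have hβpq : β = p + q := by omega
  -- key identity p * m = δ * q
  have hpm : p * m = δ * q := by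
    have h := hP
    rw [hβpq, Nat.mul_add, Nat.mul_add, mul_comm p δ] at h
    exact Nat.add_left_cancel h
  -- card of the complement
  have hIcc : Iᶜ.card = m := by
    rw [card_compl, hIcard, ← hn]
  -- degree on I \ P is δ
  have hdegQ : ∀ u ∈ I.filter (fun x => ¬ G.degree x = n - β), G.degree u = δ := by
    intro u hu
    rw [mem_filter] at hu
    rcases hdegI u hu.1 with h | h
    · exact h
    · exact absurd h hu.2
  have hqcard : (I.filter (fun x => ¬ G.degree x = n - β)).card = q := by
    have := card_filter_add_card_filter_not (s := I)
      (p := fun x => G.degree x = n - β)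
    rw [← hPdef, hIcard] at this
    omega
  -- sum of degrees over I
  have hSI : ∑ u ∈ I, G.degree u = p * m + q * δ := by
    rw [← sum_filter_add_sum_filter_not I (fun x => G.degree x = n - β)]
    have h1 : ∑ u ∈ P, G.degree u = p * m := by
      rw [sum_congr rfl (fun u hu => (mem_filter.mp hu).2), sum_const, smul_eq_mul, hm]
    have h2 : ∑ u ∈ I.filter (fun x => ¬ G.degree x = n - β), G.degree u = q * δ := by
      rw [sum_congr rfl hdegQ, sum_const, smul_eq_mul, hqcard]
    rw [← hPdef] at *
    rw [h1, h2]
  -- sum of degrees over the complement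
  have hSO : ∑ v ∈ Iᶜ, G.degree v = m * Δ := by
    rw [sum_congr rfl (fun v hv => hdegO v (mem_compl.mp hv)), sum_const, smul_eq_mul, hIcc]
  -- degree expansion
  have hdeg_expand : ∀ u, G.degree u = ∑ v, if G.Adj u v then 1 else 0 := by
    intro u
    rw [← SimpleGraph.card_neighborFinset_eq_degree, SimpleGraph.neighborFinset_eq_filter,
      Finset.card_filter]
  -- bipartite: both sides have equal degree sums
  have hSIO : ∑ u ∈ I, G.degree u = ∑ v ∈ Iᶜ, G.degree v := by
    calc ∑ u ∈ I, G.degree u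
        = ∑ u ∈ I, ∑ v, if G.Adj u v then 1 else 0 :=
          sum_congr rfl fun u _ => hdeg_expand u
      _ = ∑ v, ∑ u ∈ I, if G.Adj u v then 1 else 0 := sum_comm
      _ = ∑ v ∈ Iᶜ, ∑ u ∈ I, if G.Adj u v then 1 else 0 := by
          rw [← sum_add_sum_compl I (fun v => ∑ u ∈ I, if G.Adj u v then 1 else 0)]
          have h0 : ∑ v ∈ I, ∑ u ∈ I, (if G.Adj u v then 1 else 0) = 0 := by
            apply sum_eq_zero
            intro v hv
            apply sum_eq_zero
            intro u hu
            simp only [ite_eq_right_iff]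
            intro hadj
            rcases hbip u v hadj with ⟨_, h⟩ | ⟨h, _⟩ <;> exact absurd (by assumption) h
          rw [h0, zero_add]
      _ = ∑ v ∈ Iᶜ, G.degree v := by
          apply sum_congr rfl
          intro v hv
          rw [mem_compl] at hv
          rw [hdeg_expand v]
          rw [← sum_subset (subset_univ I)]
          · apply sum_congr rfl
            intro u _
            simp only [G.adj_comm u v]
          · intro u _ huI
            simp only [ite_eq_right_iff]
            intro hadj
            rcases hbip v u hadj with ⟨h, _⟩ | ⟨_, h⟩
            · exact absurd h hv
            · exact absurd h huI
  -- edge count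
  have hE : G.edgeFinset.card = p * m + q * δ := by
    have h2 : 2 * G.edgeFinset.card = ∑ v, G.degree v := by
      rw [← SimpleGraph.sum_degrees_eq_twice_card_edges]
    rw [← sum_add_sum_compl I (fun v => G.degree v), ← hSIO, hSI] at h2
    omega
  constructor
  · rw [hE]
    zify
    push_cast [hβpq]
    have hpm' : (p : ℤ) * m = δ * q := by exact_mod_cast hpm
    linear_combination ((m : ℤ) - δ) * hpm'
  · -- second Zagreb computation
    have hSI2 : ∑ u ∈ I, (G.degree u) ^ 2 = p * m ^ 2 + q * δ ^ 2 := by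
      rw [← sum_filter_add_sum_filter_not I (fun x => G.degree x = n - β)]
      have h1 : ∑ u ∈ P, (G.degree u) ^ 2 = p * m ^ 2 := by
        rw [sum_congr rfl (fun u hu => by rw [(mem_filter.mp hu).2]), sum_const,
          smul_eq_mul, hm]
      have h2 : ∑ u ∈ I.filter (fun x => ¬ G.degree x = n - β), (G.degree u) ^ 2
          = q * δ ^ 2 := by
        rw [sum_congr rfl (fun u hu => by rw [hdegQ u hu]), sum_const, smul_eq_mul, hqcard]
      rw [← hPdef] at *
      rw [h1, h2]
    have hSO2 : ∑ v ∈ Iᶜ, (G.degree v) ^ 2 = m * Δ ^ 2 := by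
      rw [sum_congr rfl (fun v hv => by rw [hdegO v (mem_compl.mp hv)]), sum_const,
        smul_eq_mul, hIcc]
    rw [← sum_add_sum_compl I (fun v => (G.degree v) ^ 2), hSI2, hSO2]
    zify
    push_cast [hβpq]
    have hpm' : (p : ℤ) * m = δ * q := by exact_mod_cast hpm
    linear_combination ((m : ℤ) - δ) * hpm'
end

section
/- (Equality case of Pólya–Szegő) Let 0 < m_1 ≤ a_k ≤ M_1 and 0 < m_2 ≤ b_k ≤ M_2 for k = 1, …, s with M_1 M_2 > m_1 m_2. Then equality holds in (∑ a_k²)(∑ b_k²) ≤ ((M_1 M_2 + m_1 m_2)²/(4 m_1 m_2 M_1 M_2))(∑ a_k b_k)² if and only if ν = M_1 m_2 s/(M_1 m_2 + m_1 M_2) is an integer and there are exactly ν indices k with (a_k, b_k) = (m_1, M_2) while the remaining s − ν indices satisfy (a_k, b_k) = (M_1, m_2). -/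
open Finset

private lemma sum_split_aux {s : ℕ} (T : Finset (Fin s)) (f : Fin s → ℝ) (c d : ℝ)
    (h1 : ∀ k ∈ T, f k = c) (h2 : ∀ k ∉ T, f k = d) :
    ∑ k, f k = (T.card : ℝ) * c + ((s : ℝ) - T.card) * d := by
  classical
  have hle : T.card ≤ s := by
    simpa using Finset.card_le_card (Finset.subset_univ T)
  rw [← Finset.sum_add_sum_compl T f]
  rw [Finset.sum_congr rfl h1,
    Finset.sum_congr rfl (fun k hk => h2 k (by simpa using hk))]
  rw [Finset.sum_const, Finset.sum_const, Finset.card_compl, Fintype.card_fin,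
    nsmul_eq_mul, nsmul_eq_mul, Nat.cast_sub hle]

set_option maxHeartbeats 2000000 in
theorem polya_szego_equality (s : ℕ) (hs : 0 < s) (a b : Fin s → ℝ)
    (m₁ M₁ m₂ M₂ : ℝ) (hm₁ : 0 < m₁) (hm₂ : 0 < m₂)
    (ha : ∀ k, m₁ ≤ a k ∧ a k ≤ M₁) (hb : ∀ k, m₂ ≤ b k ∧ b k ≤ M₂)
    (hMm : m₁ * m₂ < M₁ * M₂) :
    (∑ k, (a k) ^ 2) * (∑ k, (b k) ^ 2) =
        (M₁ * M₂ + m₁ * m₂) ^ 2 / (4 * m₁ * m₂ * M₁ * M₂) * (∑ k, a k * b k) ^ 2 ↔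
      ∃ ν : ℕ, (ν : ℝ) = M₁ * m₂ * s / (M₁ * m₂ + m₁ * M₂) ∧
        ∃ T : Finset (Fin s), T.card = ν ∧
          (∀ k ∈ T, a k = m₁ ∧ b k = M₂) ∧ (∀ k ∉ T, a k = M₁ ∧ b k = m₂) := by
  classical
  have hne : Nonempty (Fin s) := ⟨⟨0, hs⟩⟩
  obtain ⟨k₀⟩ := hne
  have hM₁ : 0 < M₁ := lt_of_lt_of_le hm₁ ((ha k₀).1.trans (ha k₀).2)
  have hM₂ : 0 < M₂ := lt_of_lt_of_le hm₂ ((hb k₀).1.trans (hb k₀).2)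
  have hden : (0:ℝ) < 4 * m₁ * m₂ * M₁ * M₂ := by positivity
  have hden2 : (0:ℝ) < M₁ * m₂ + m₁ * M₂ := by positivity
  set A := ∑ k, (a k) ^ 2 with hAdef
  set B := ∑ k, (b k) ^ 2 with hBdef
  set C := ∑ k, a k * b k with hCdef
  have huniv : (Finset.univ : Finset (Fin s)).Nonempty := ⟨k₀, Finset.mem_univ k₀⟩
  have hApos : 0 < A := by
    rw [hAdef]
    exact Finset.sum_pos (fun k _ => by nlinarith [(ha k).1]) huniv
  have hBpos : 0 < B := by
    rw [hBdef]
    exact Finset.sum_pos (fun k _ => by nlinarith [(hb k).1]) huniv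
  have hCpos : 0 < C := by
    rw [hCdef]
    exact Finset.sum_pos (fun k _ => by nlinarith [(ha k).1, (hb k).1]) huniv
  set S := ∑ k, (M₁ * b k - m₂ * a k) * (M₂ * a k - m₁ * b k) with hSdef
  have hf0 : ∀ k, 0 ≤ (M₁ * b k - m₂ * a k) * (M₂ * a k - m₁ * b k) := by
    intro k
    have h1 : 0 ≤ M₁ * b k - m₂ * a k := by nlinarith [(ha k).2, (hb k).1]
    have h2 : 0 ≤ M₂ * a k - m₁ * b k := by nlinarith [(ha k).1, (hb k).2]
    exact mul_nonneg h1 h2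
  have hsum : m₂ * M₂ * A + m₁ * M₁ * B + S = (M₁ * M₂ + m₁ * m₂) * C := by
    rw [hAdef, hBdef, hCdef, hSdef, Finset.mul_sum, Finset.mul_sum, Finset.mul_sum,
      ← Finset.sum_add_distrib, ← Finset.sum_add_distrib]
    exact Finset.sum_congr rfl fun k _ => by ring
  constructor
  · intro hEq
    have heq4 : A * B * (4 * m₁ * m₂ * M₁ * M₂) = (M₁ * M₂ + m₁ * m₂) ^ 2 * C ^ 2 := by
      rw [div_mul_eq_mul_div, eq_div_iff (ne_of_gt hden)] at hEq
      linear_combination hEq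
    have hXpos : 0 < m₂ * M₂ * A := by positivity
    have hYpos : 0 < m₁ * M₁ * B := by positivity
    have hDpos : 0 < (M₁ * M₂ + m₁ * m₂) * C := by positivity
    have hSnn : 0 ≤ S := Finset.sum_nonneg fun k _ => hf0 k
    have hkey : S * ((M₁ * M₂ + m₁ * m₂) * C + (m₂ * M₂ * A + m₁ * M₁ * B))
        + (m₂ * M₂ * A - m₁ * M₁ * B) ^ 2 = 0 := by
      linear_combination ((M₁ * M₂ + m₁ * m₂) * C + m₂ * M₂ * A + m₁ * M₁ * B) * hsum - heq4
    have hS0 : S = 0 := by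
      have hSle : S ≤ 0 := by
        nlinarith [sq_nonneg (m₂ * M₂ * A - m₁ * M₁ * B), hkey, hDpos, hXpos, hYpos]
      linarith
    have hXY : m₂ * M₂ * A = m₁ * M₁ * B := by
      have h2 : (m₂ * M₂ * A - m₁ * M₁ * B) ^ 2 = 0 := by
        rw [hS0, zero_mul, zero_add] at hkey; exact hkey
      have := pow_eq_zero_iff (n := 2) (by norm_num) |>.mp h2
      linarith [sub_eq_zero.mp this]
    have hfk0 : ∀ k, (M₁ * b k - m₂ * a k) * (M₂ * a k - m₁ * b k) = 0 := by
      intro k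
      have := (Finset.sum_eq_zero_iff_of_nonneg (fun k _ => hf0 k)).mp hS0
      exact this k (Finset.mem_univ k)
    have hdich : ∀ k, (a k = M₁ ∧ b k = m₂) ∨ (a k = m₁ ∧ b k = M₂) := by
      intro k
      rcases mul_eq_zero.mp (hfk0 k) with h | h
      · left
        have haM : a k = M₁ := by
          have : M₁ ≤ a k := by nlinarith [(hb k).1]
          linarith [(ha k).2]
        constructor
        · exact haM
        · have : M₁ * b k = M₁ * m₂ := by rw [haM] at h; linarith
          exact mul_left_cancel₀ (ne_of_gt hM₁) this
      · right
        have hbM : b k = M₂ := by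
          have : M₂ ≤ b k := by nlinarith [(ha k).1]
          linarith [(hb k).2]
        constructor
        · have : m₁ * b k = m₁ * M₂ → a k = m₁ := by
            intro h'
            have hb' : b k = M₂ := hbM
            rw [hbM] at h
            have : M₂ * a k = M₂ * m₁ := by linarith
            have := mul_left_cancel₀ (ne_of_gt hM₂) this
            linarith
          apply this
          rw [hbM]
        · exact hbM
    set T := Finset.univ.filter (fun k => a k = m₁ ∧ b k = M₂) with hTdef
    have hT1 : ∀ k ∈ T, a k = m₁ ∧ b k = M₂ := fun k hk => (Finset.mem_filter.mp hk).2
    have hT2 : ∀ k ∉ T, a k = M₁ ∧ b k = m₂ := by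
      intro k hk
      rcases hdich k with h | h
      · exact h
      · exact absurd (Finset.mem_filter.mpr ⟨Finset.mem_univ k, h⟩) hk
    have hAeq : A = (T.card : ℝ) * m₁ ^ 2 + ((s : ℝ) - T.card) * M₁ ^ 2 := by
      rw [hAdef]
      exact sum_split_aux T _ _ _ (fun k hk => by rw [(hT1 k hk).1])
        (fun k hk => by rw [(hT2 k hk).1])
    have hBeq : B = (T.card : ℝ) * M₂ ^ 2 + ((s : ℝ) - T.card) * m₂ ^ 2 := by
      rw [hBdef]
      exact sum_split_aux T _ _ _ (fun k hk => by rw [(hT1 k hk).2])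
        (fun k hk => by rw [(hT2 k hk).2])
    rw [hAeq, hBeq] at hXY
    have hfac : ((T.card : ℝ) * (m₁ * M₂) - ((s : ℝ) - T.card) * (M₁ * m₂))
        * (m₁ * m₂ - M₁ * M₂) = 0 := by linear_combination hXY
    have hpq : (T.card : ℝ) * (m₁ * M₂) = ((s : ℝ) - T.card) * (M₁ * m₂) := by
      rcases mul_eq_zero.mp hfac with h | h
      · linarith [sub_eq_zero.mp h]
      · exact absurd h (ne_of_lt (sub_neg.mpr hMm))
    refine ⟨T.card, ?_, T, rfl, hT1, hT2⟩
    rw [eq_div_iff (ne_of_gt hden2)]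
    linear_combination hpq
  · rintro ⟨ν, hν, T, hTcard, hT1, hT2⟩
    have hx : (T.card : ℝ) = (ν : ℝ) := by rw [hTcard]
    have hpq : (T.card : ℝ) * (m₁ * M₂) = ((s : ℝ) - T.card) * (M₁ * m₂) := by
      rw [eq_div_iff (ne_of_gt hden2)] at hν
      rw [hx]
      linear_combination hν
    have hAeq : A = (T.card : ℝ) * m₁ ^ 2 + ((s : ℝ) - T.card) * M₁ ^ 2 := by
      rw [hAdef]
      exact sum_split_aux T _ _ _ (fun k hk => by rw [(hT1 k hk).1])
        (fun k hk => by rw [(hT2 k hk).1])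
    have hBeq : B = (T.card : ℝ) * M₂ ^ 2 + ((s : ℝ) - T.card) * m₂ ^ 2 := by
      rw [hBdef]
      exact sum_split_aux T _ _ _ (fun k hk => by rw [(hT1 k hk).2])
        (fun k hk => by rw [(hT2 k hk).2])
    have hCeq : C = (T.card : ℝ) * (m₁ * M₂) + ((s : ℝ) - T.card) * (M₁ * m₂) := by
      rw [hCdef]
      exact sum_split_aux T _ _ _ (fun k hk => by rw [(hT1 k hk).1, (hT1 k hk).2])
        (fun k hk => by rw [(hT2 k hk).1, (hT2 k hk).2])
    rw [hAeq, hBeq, hCeq, div_mul_eq_mul_div, eq_div_iff (ne_of_gt hden)]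
    linear_combination (-(M₁ * M₂ - m₁ * m₂) ^ 2
      * ((T.card : ℝ) * (m₁ * M₂) - ((s : ℝ) - T.card) * (M₁ * m₂))) * hpq
end
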